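/- Let f(θ) = ⟨0|U(θ)† M U(θ)|0⟩ where U(θ) = A exp(-iθG/2) B for fixed unitaries A, B and a Hermitian G with G² = I, and Hermitian M. Then there exist real numbers α, β, γ such that f(θ) = α·cos(θ - β) + γ for all θ. -/

import Mathlib

/-!
Since `G ^ 2 = 1`, the exponential series splits into even and odd parts and
`exp (-(θ / 2) i G) = cos (θ / 2) - i sin (θ / 2) G`. Conjugating `Aᴴ M A` by this makes `f θ` a
real quadratic form in `cos (θ / 2)` and `sin (θ / 2)`, which the double-angle formulas turn into
`a cos θ + b sin θ + γ`; harmonic addition, with `α` and `β` the modulus and argument of `a + b i`,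
finishes the proof.
-/

open scoped Matrix
open NormedSpace Complex

theorem exp_smul_of_sq_eq_one {𝔸 : Type*} [NormedRing 𝔸] [NormedAlgebra ℂ 𝔸] [CompleteSpace 𝔸]
    {g : 𝔸} (hg : g ^ 2 = 1) (z : ℂ) :
    exp (z • g) = cosh z • (1 : 𝔸) + sinh z • g := by
  rw [exp_eq_tsum ℂ]
  refine HasSum.tsum_eq (HasSum.even_add_odd ?_ ?_)
  · convert (hasSum_cosh z).smul_const (1 : 𝔸) using 2 with k
    rw [smul_pow, pow_mul g, hg, one_pow, smul_smul, div_eq_inv_mul]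
  · convert (hasSum_sinh z).smul_const g using 2 with k
    rw [smul_pow, pow_succ g, pow_mul g, hg, one_pow, one_mul, smul_smul, div_eq_inv_mul]

theorem exp_neg_half_mul_I_smul_of_sq_eq_one {𝔸 : Type*} [NormedRing 𝔸] [NormedAlgebra ℂ 𝔸]
    [CompleteSpace 𝔸] {g : 𝔸} (hg : g ^ 2 = 1) (θ : ℝ) :
    exp ((-((θ : ℂ) / 2) * I) • g) =
      (Real.cos (θ / 2) : ℂ) • (1 : 𝔸) - ((Real.sin (θ / 2) : ℂ) * I) • g := by
  rw [exp_smul_of_sq_eq_one hg, cosh_mul_I, sinh_mul_I, cos_neg, sin_neg, neg_mul, neg_smul,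
    ← sub_eq_add_neg]
  push_cast
  rfl

theorem IsSelfAdjoint.star_cos_sub_sin_I_smul_mul_mul {R : Type*} [Ring R] [StarRing R]
    [Algebra ℂ R] [StarModule ℂ R] {g : R} (hg : IsSelfAdjoint g) (m : R) (c s : ℝ) :
    star ((c : ℂ) • 1 - ((s : ℂ) * I) • g) * m * ((c : ℂ) • 1 - ((s : ℂ) * I) • g) =
      ((c ^ 2 : ℝ) : ℂ) • m + ((c * s : ℝ) : ℂ) • (I • (g * m - m * g)) +
        ((s ^ 2 : ℝ) : ℂ) • (g * m * g) := by
  simp only [star_sub, star_smul, star_one, hg.star_eq, star_mul', Complex.star_def, conj_ofReal,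
    conj_I]
  simp only [sub_mul, mul_sub, smul_mul_assoc, mul_smul_comm, one_mul, mul_one, smul_sub,
    smul_smul, mul_assoc]
  push_cast
  match_scalars <;> grind [I_sq]

theorem Real.exists_mul_cos_sub_eq (a b : ℝ) :
    ∃ α β : ℝ, ∀ θ : ℝ, α * Real.cos (θ - β) = a * Real.cos θ + b * Real.sin θ := by
  refine ⟨‖(⟨a, b⟩ : ℂ)‖, arg ⟨a, b⟩, fun θ => ?_⟩
  rw [Real.cos_sub, mul_add, mul_left_comm, mul_left_comm _ (Real.sin θ), norm_mul_cos_arg,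
    norm_mul_sin_arg, mul_comm a, mul_comm b]

theorem Real.exists_cos_sub_eq_half_angle_quadratic (x y z : ℝ) :
    ∃ α β γ : ℝ, ∀ θ : ℝ,
      x * Real.cos (θ / 2) ^ 2 + y * (Real.cos (θ / 2) * Real.sin (θ / 2)) +
        z * Real.sin (θ / 2) ^ 2 = α * Real.cos (θ - β) + γ := by
  obtain ⟨α, β, h⟩ := Real.exists_mul_cos_sub_eq ((x - z) / 2) (y / 2)
  refine ⟨α, β, (x + z) / 2, fun θ => ?_⟩
  have hcos := Real.cos_two_mul' (θ / 2)
  have hsin := Real.sin_two_mul (θ / 2)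
  rw [mul_div_cancel₀ θ two_ne_zero] at hcos hsin
  linear_combination -h θ - (x - z) / 2 * hcos - y / 2 * hsin +
    (x + z) / 2 * Real.sin_sq_add_cos_sq (θ / 2)

theorem pqc_expectation_sinusoidal_general (n : ℕ)
    (A B G M : Matrix (Fin n) (Fin n) ℂ)
    (hG : G.IsHermitian) (hG2 : G ^ 2 = 1) (hM : M.IsHermitian)
    (v : Fin n → ℂ)
    (U : ℝ → Matrix (Fin n) (Fin n) ℂ)
    (hU : ∀ θ : ℝ, U θ = A * NormedSpace.exp ((-(θ / 2) * Complex.I) • G) * B)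
    (f : ℝ → ℂ)
    (hf : ∀ θ : ℝ, f θ = star v ⬝ᵥ ((U θ)ᴴ * M * U θ).mulVec v) :
    ∃ α β γ : ℝ, ∀ θ : ℝ, f θ = (α * Real.cos (θ - β) + γ : ℝ) := by
  -- `exp` does not depend on the norm; any Banach-algebra norm makes the series lemmas available.
  let : NormedRing (Matrix (Fin n) (Fin n) ℂ) := Matrix.linftyOpNormedRing
  let : NormedAlgebra ℂ (Matrix (Fin n) (Fin n) ℂ) := Matrix.linftyOpNormedAlgebra
  set N := Aᴴ * M * A
  let q : Matrix (Fin n) (Fin n) ℂ → ℝ := fun X => (star v ⬝ᵥ (Bᴴ * X * B) *ᵥ v).re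
  obtain ⟨α, β, γ, hαβγ⟩ := Real.exists_cos_sub_eq_half_angle_quadratic
    (q N) (q (I • (G * N - N * G))) (q (G * N * G))
  refine ⟨α, β, γ, fun θ => ?_⟩
  have him : (f θ).im = 0 := by
    rw [hf θ]
    exact (Matrix.isHermitian_conjTranspose_mul_mul _ hM).im_star_dotProduct_mulVec_self v
  have hE : NormedSpace.exp ((-(θ / 2 : ℂ) * I) • G) =
      (Real.cos (θ / 2) : ℂ) • 1 - ((Real.sin (θ / 2) : ℂ) * I) • G :=
    exp_neg_half_mul_I_smul_of_sq_eq_one hG2 θ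
  have hconj : (U θ)ᴴ * M * U θ = Bᴴ * (((Real.cos (θ / 2) ^ 2 : ℝ) : ℂ) • N +
      ((Real.cos (θ / 2) * Real.sin (θ / 2) : ℝ) : ℂ) • (I • (G * N - N * G)) +
      ((Real.sin (θ / 2) ^ 2 : ℝ) : ℂ) • (G * N * G)) * B := by
    rw [hU θ, hE, ← hG.isSelfAdjoint.star_cos_sub_sin_I_smul_mul_mul]
    simp only [Matrix.conjTranspose_mul, Matrix.star_eq_conjTranspose, N, Matrix.mul_assoc]
  rw [← Complex.re_add_im (f θ), him, Complex.ofReal_zero, zero_mul, add_zero, ← hαβγ, hf θ, hconj]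
  congr 1
  simp only [q, Matrix.mul_add, Matrix.add_mul, Matrix.mul_smul, Matrix.smul_mul,
    Matrix.add_mulVec, Matrix.smul_mulVec, dotProduct_add, dotProduct_smul, smul_eq_mul,
    Complex.add_re, Complex.re_ofReal_mul]
  ring

theorem pqc_expectation_sinusoidal (n : ℕ)
    (A B G M : Matrix (Fin n) (Fin n) ℂ)
    (hA : A ∈ Matrix.unitaryGroup (Fin n) ℂ) (hB : B ∈ Matrix.unitaryGroup (Fin n) ℂ)
    (hG : G.IsHermitian) (hG2 : G ^ 2 = 1) (hM : M.IsHermitian)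
    (v : Fin n → ℂ)
    (U : ℝ → Matrix (Fin n) (Fin n) ℂ)
    (hU : ∀ θ : ℝ, U θ = A * NormedSpace.exp ((-(θ / 2) * Complex.I) • G) * B)
    (f : ℝ → ℂ)
    (hf : ∀ θ : ℝ, f θ = star v ⬝ᵥ ((U θ)ᴴ * M * U θ).mulVec v) :
    ∃ α β γ : ℝ, ∀ θ : ℝ, f θ = (α * Real.cos (θ - β) + γ : ℝ) :=
  pqc_expectation_sinusoidal_general n A B G M hG hG2 hM v U hU f hf
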